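/- arXiv:2203.15890 — 4 statements merged into one kernel-verified Lean document; each statement's English description precedes it below -/
import Mathlib

section
/- Sufficiency direction of the testable implication (Theorem 1, binary treatment): suppose D takes values in {0, 1}, the observed outcome satisfies Y = D·Y₁ + (1 − D)·Y₀ for potential outcomes Y₀, Y₁, and the pair (Y₀, Y₁) is conditionally independent of the pair (D, Z) given X. Then the observed outcome Y is conditionally independent of Z given the pair (D, X). -/
open MeasureTheory ProbabilityTheory MeasurableSpace

open Set

/-!
Write `W = (Y₀, Y₁)`. Conditional independence `m₁ ⫫ m₂ | m` is equivalent to the Markov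
property `P(t | m ⊔ m₂) = P(t | m)` for all `t ∈ m₁`; the forward direction is checked on the
π-system of intersections `a ∩ b`, `a ∈ m`, `b ∈ m₂`. Both graphoid rules needed here follow
from it at once: weak union turns `W ⫫ (D, Z) | X` into `W ⫫ Z | (D, X)`, and since `D` is
measurable for the new conditioning σ-algebra it can be absorbed, giving `(W, D) ⫫ Z | (D, X)`.
The observed outcome is a measurable function of `(W, D)`.
-/

namespace MeasurableSpace

variable {Ω : Type*}

theorem isPiSystem_image2_inter (m₁ m₂ : MeasurableSpace Ω) :
    IsPiSystem (image2 (· ∩ ·) {s | MeasurableSet[m₁] s} {s | MeasurableSet[m₂] s}) := by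
  rintro _ ⟨a, ha, b, hb, rfl⟩ _ ⟨a', ha', b', hb', rfl⟩ -
  exact ⟨a ∩ a', MeasurableSet.inter ha ha', b ∩ b', MeasurableSet.inter hb hb',
    inter_inter_inter_comm a a' b b'⟩

theorem generateFrom_image2_inter (m₁ m₂ : MeasurableSpace Ω) :
    generateFrom (image2 (· ∩ ·) {s | MeasurableSet[m₁] s} {s | MeasurableSet[m₂] s}) =
      m₁ ⊔ m₂ := by
  refine le_antisymm (generateFrom_le ?_) (sup_le (fun a ha => ?_) (fun b hb => ?_))
  · rintro _ ⟨a, ha, b, hb, rfl⟩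
    exact (le_sup_left (b := m₂) a ha).inter (le_sup_right (a := m₁) b hb)
  · exact measurableSet_generateFrom ⟨a, ha, univ, MeasurableSet.univ, inter_univ a⟩
  · exact measurableSet_generateFrom ⟨univ, MeasurableSet.univ, b, hb, univ_inter b⟩

end MeasurableSpace

namespace MeasureTheory

variable {Ω E : Type*} [NormedAddCommGroup E] [NormedSpace ℝ E]
  {m mΩ : MeasurableSpace Ω} {μ : Measure Ω} {C : Set (Set Ω)} {f g : Ω → E}

theorem setIntegral_eq_of_isPiSystem (hm : m ≤ mΩ) (hC : m = generateFrom C) (hCπ : IsPiSystem C)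
    (huniv : univ ∈ C) (hf : Integrable f μ) (hg : Integrable g μ)
    (hfg : ∀ t ∈ C, ∫ x in t, f x ∂μ = ∫ x in t, g x ∂μ) {t : Set Ω} (ht : MeasurableSet[m] t) :
    ∫ x in t, f x ∂μ = ∫ x in t, g x ∂μ := by
  induction t, ht using MeasurableSpace.induction_on_inter hC hCπ with
  | empty => simp
  | basic t ht => exact hfg t ht
  | compl t ht ih =>
    have h_univ := hfg univ huniv
    rw [setIntegral_univ, setIntegral_univ] at h_univ
    rw [setIntegral_compl (hm t ht) hf, setIntegral_compl (hm t ht) hg, ih, h_univ]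
  | iUnion t hdisj ht ih =>
    rw [integral_iUnion (fun i => hm _ (ht i)) hdisj hf.integrableOn,
      integral_iUnion (fun i => hm _ (ht i)) hdisj hg.integrableOn]
    exact tsum_congr ih

theorem ae_eq_condExp_of_forall_setIntegral_eq_of_isPiSystem [CompleteSpace E]
    [IsFiniteMeasure μ] (hm : m ≤ mΩ) (hC : m = generateFrom C) (hCπ : IsPiSystem C)
    (huniv : univ ∈ C) (hf : Integrable f μ) (hg : Integrable g μ)
    (hgm : AEStronglyMeasurable[m] g μ) (hfg : ∀ t ∈ C, ∫ x in t, g x ∂μ = ∫ x in t, f x ∂μ) :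
    g =ᵐ[μ] μ[f | m] :=
  ae_eq_condExp_of_forall_setIntegral_eq hm hf (fun _ _ _ => hg.integrableOn)
    (fun _ ht _ => setIntegral_eq_of_isPiSystem hm hC hCπ huniv hg hf hfg ht) hgm

end MeasureTheory

namespace ProbabilityTheory

variable {Ω : Type*} {m m₁ m₂ m₃ mΩ : MeasurableSpace Ω} {μ : Measure Ω} [IsFiniteMeasure μ]

theorem condExp_indicator_eq_mul_condExp {φ : Ω → ℝ} (hφm : StronglyMeasurable[m] φ)
    (hφ : Integrable φ μ) {s : Set Ω} (hs : MeasurableSet s) :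
    μ[s.indicator φ | m] =ᵐ[μ] φ * (μ⟦s | m⟧) := by
  have h_eq : s.indicator φ = φ * s.indicator fun _ => (1 : ℝ) := by
    ext x
    by_cases hx : x ∈ s <;> simp [hx]
  rw [h_eq]
  exact condExp_mul_of_stronglyMeasurable_left hφm (h_eq ▸ hφ.indicator hs)
    ((integrable_const 1).indicator hs)

variable [StandardBorelSpace Ω]

theorem condIndep_iff_forall_condExp_sup_eq (hm : m ≤ mΩ) (hm₁ : m₁ ≤ mΩ) (hm₂ : m₂ ≤ mΩ) :
    CondIndep m m₁ m₂ hm μ ↔ ∀ t, MeasurableSet[m₁] t → (μ⟦t | m ⊔ m₂⟧) =ᵐ[μ] (μ⟦t | m⟧) := by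
  rw [condIndep_iff m m₁ m₂ hm hm₁ hm₂]
  have hsup : m ⊔ m₂ ≤ mΩ := sup_le hm hm₂
  have h_one : ∀ {s}, MeasurableSet s → Integrable (s.indicator fun _ => (1 : ℝ)) μ :=
    fun hs => (integrable_const 1).indicator hs
  have pull_out : ∀ {t b}, MeasurableSet b →
      μ[b.indicator (μ⟦t | m⟧) | m] =ᵐ[μ] (μ⟦t | m⟧) * (μ⟦b | m⟧) := fun hb =>
    condExp_indicator_eq_mul_condExp stronglyMeasurable_condExp integrable_condExp hb
  constructor
  · intro h t ht
    refine (ae_eq_condExp_of_forall_setIntegral_eq_of_isPiSystem hsup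
      (generateFrom_image2_inter m m₂).symm (isPiSystem_image2_inter m m₂)
      ⟨univ, .univ, univ, .univ, inter_univ _⟩ (h_one (hm₁ t ht)) integrable_condExp
      (stronglyMeasurable_condExp.mono (le_sup_left : m ≤ m ⊔ m₂)).aestronglyMeasurable ?_).symm
    rintro _ ⟨a, ha, b, hb, rfl⟩
    have hb' := hm₂ b hb
    calc ∫ x in a ∩ b, (μ⟦t | m⟧) x ∂μ = ∫ x in a, b.indicator (μ⟦t | m⟧) x ∂μ :=
          (setIntegral_indicator hb').symm
      _ = ∫ x in a, μ[b.indicator (μ⟦t | m⟧) | m] x ∂μ :=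
          (setIntegral_condExp hm (integrable_condExp.indicator hb') ha).symm
      _ = ∫ x in a, (μ⟦t ∩ b | m⟧) x ∂μ :=
          setIntegral_congr_ae (hm a ha)
            ((pull_out hb').trans (h t b ht hb).symm |>.mono fun x hx _ => hx)
      _ = ∫ x in a, (t ∩ b).indicator (fun _ => (1 : ℝ)) x ∂μ :=
          setIntegral_condExp hm (h_one ((hm₁ t ht).inter hb')) ha
      _ = ∫ x in a ∩ b, t.indicator (fun _ => (1 : ℝ)) x ∂μ := by
          rw [inter_comm t b, ← indicator_indicator, setIntegral_indicator hb']
  · intro h t b ht hb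
    have hb' : MeasurableSet[m ⊔ m₂] b := le_sup_right (a := m) b hb
    calc (μ⟦t ∩ b | m⟧) = μ[b.indicator (t.indicator fun _ => (1 : ℝ)) | m] := by
          rw [indicator_indicator, inter_comm]
      _ =ᵐ[μ] μ[μ[b.indicator (t.indicator fun _ => (1 : ℝ)) | m ⊔ m₂] | m] :=
          (condExp_condExp_of_le le_sup_left hsup).symm
      _ =ᵐ[μ] μ[b.indicator (μ⟦t | m ⊔ m₂⟧) | m] :=
          condExp_congr_ae (condExp_indicator (h_one (hm₁ t ht)) hb')
      _ =ᵐ[μ] μ[b.indicator (μ⟦t | m⟧) | m] :=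
          condExp_congr_ae ((h t ht).indicator (s := b))
      _ =ᵐ[μ] (μ⟦t | m⟧) * (μ⟦b | m⟧) := pull_out (hm₂ b hb)

theorem CondIndep.weak_union {hm : m ≤ mΩ} (hm₁ : m₁ ≤ mΩ) (hm₂ : m₂ ≤ mΩ) (hm₃ : m₃ ≤ mΩ)
    (h : CondIndep m m₁ (m₂ ⊔ m₃) hm μ) : CondIndep (m ⊔ m₂) m₁ m₃ (sup_le hm hm₂) μ := by
  have h₂ := (condIndep_iff_forall_condExp_sup_eq hm hm₁ hm₂).1
    (condIndep_of_condIndep_of_le_right h le_sup_left)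
  rw [condIndep_iff_forall_condExp_sup_eq hm hm₁ (sup_le hm₂ hm₃)] at h
  rw [condIndep_iff_forall_condExp_sup_eq _ hm₁ hm₃, sup_assoc]
  exact fun t ht => (h t ht).trans (h₂ t ht).symm

theorem CondIndep.sup_cond_left {hm : m ≤ mΩ} (hm₁ : m₁ ≤ mΩ) (hm₂ : m₂ ≤ mΩ)
    (h : CondIndep m m₁ m₂ hm μ) : CondIndep m (m₁ ⊔ m) m₂ hm μ := by
  have h_markov := (condIndep_iff_forall_condExp_sup_eq hm hm₂ hm₁).1 h.symm
  refine ((condIndep_iff_forall_condExp_sup_eq hm hm₂ (sup_le hm₁ hm)).2 fun t ht => ?_).symm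
  rw [sup_comm m₁, ← sup_assoc, sup_idem]
  exact h_markov t ht

end ProbabilityTheory

theorem observed_outcome_condIndep_instrument_general
    {Ω γ δ : Type*}
    [MeasurableSpace Ω] [StandardBorelSpace Ω]
    [MeasurableSpace γ]
    [MeasurableSpace δ]
    (μ : Measure Ω) [IsProbabilityMeasure μ]
    (D : Ω → ℝ) (Y0 Y1 : Ω → ℝ) (Z : Ω → γ) (X : Ω → δ)
    (hD : Measurable D)
    (hY0 : Measurable Y0) (hY1 : Measurable Y1)
    (hZ : Measurable Z) (hX : Measurable X)
    (Y : Ω → ℝ) (hYdef : ∀ ω, Y ω = D ω * Y1 ω + (1 - D ω) * Y0 ω)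
    (h : CondIndepFun (MeasurableSpace.comap X inferInstance) hX.comap_le
      (fun ω => (Y0 ω, Y1 ω)) (fun ω => (D ω, Z ω)) μ) :
    CondIndepFun (MeasurableSpace.comap (fun ω => (D ω, X ω)) inferInstance)
      ((hD.prodMk hX).comap_le) Y Z μ := by
  rw [condIndepFun_iff_condIndep] at h ⊢
  rw [show MeasurableSpace.comap (fun ω => (D ω, Z ω)) inferInstance = _ from
    comap_prodMk D Z] at h
  set W : Ω → ℝ × ℝ := fun ω => (Y0 ω, Y1 ω)
  have hW : Measurable W := hY0.prodMk hY1
  have h_cond := (h.weak_union hW.comap_le hD.comap_le hZ.comap_le).sup_cond_left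
    hW.comap_le hZ.comap_le
  set mW := MeasurableSpace.comap W inferInstance
  set mX := MeasurableSpace.comap X inferInstance
  set mD := MeasurableSpace.comap D inferInstance
  have hY_le : MeasurableSpace.comap Y inferInstance ≤ mW ⊔ (mX ⊔ mD) := by
    have hW' : Measurable[mW ⊔ (mX ⊔ mD)] W := (comap_measurable W).mono le_sup_left le_rfl
    have hY0' : Measurable[mW ⊔ (mX ⊔ mD)] Y0 := measurable_fst.comp hW'
    have hY1' : Measurable[mW ⊔ (mX ⊔ mD)] Y1 := measurable_snd.comp hW'
    have hD' : Measurable[mW ⊔ (mX ⊔ mD)] D :=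
      (comap_measurable D).mono (le_sup_right.trans le_sup_right) le_rfl
    rw [funext hYdef]
    exact Measurable.comap_le (by fun_prop)
  convert condIndep_of_condIndep_of_le_left h_cond hY_le using 1
  rw [show MeasurableSpace.comap (fun ω => (D ω, X ω)) inferInstance = _ from comap_prodMk D X,
    sup_comm]

/-- Sufficiency direction of the testable implication (Theorem 1, binary treatment): if the
observed outcome is `Y = D·Y₁ + (1 − D)·Y₀` with `D` binary, and `(Y₀, Y₁)` is conditionally
independent of `(D, Z)` given `X`, then `Y` is conditionally independent of `Z` given `(D, X)`. -/
theorem observed_outcome_condIndep_instrument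
    {Ω γ δ : Type*}
    [MeasurableSpace Ω] [StandardBorelSpace Ω]
    [MeasurableSpace γ] [StandardBorelSpace γ]
    [MeasurableSpace δ] [StandardBorelSpace δ]
    (μ : Measure Ω) [IsProbabilityMeasure μ]
    (D : Ω → ℝ) (Y0 Y1 : Ω → ℝ) (Z : Ω → γ) (X : Ω → δ)
    (hD : Measurable D) (hD01 : ∀ ω, D ω = 0 ∨ D ω = 1)
    (hY0 : Measurable Y0) (hY1 : Measurable Y1)
    (hZ : Measurable Z) (hX : Measurable X)
    (Y : Ω → ℝ) (hYdef : ∀ ω, Y ω = D ω * Y1 ω + (1 - D ω) * Y0 ω)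
    (h : CondIndepFun (MeasurableSpace.comap X inferInstance) hX.comap_le
      (fun ω => (Y0 ω, Y1 ω)) (fun ω => (D ω, Z ω)) μ) :
    CondIndepFun (MeasurableSpace.comap (fun ω => (D ω, X ω)) inferInstance)
      ((hD.prodMk hX).comap_le) Y Z μ :=
  observed_outcome_condIndep_instrument_general μ D Y0 Y1 Z X hD hY0 hY1 hZ hX Y hYdef h
end

section
/- Doubly robust moment identity (correct outcome model): with Z {0,1}-valued, W a random element, true conditional means μ₁(W) = E[Y·Z|σ(W)]/p(W) and μ₀(W) = E[Y·(1−Z)|σ(W)]/(1−p(W)) where p(W)=E[Z|σ(W)] ∈ (0,1) a.s., and ANY σ(W)-measurable function q with 0 < q(W) < 1 a.s., the doubly robust score satisfies E[ μ₁(W) − μ₀(W) + Z·(Y − μ₁(W))/q(W) − (1−Z)·(Y − μ₀(W))/(1−q(W)) ] = E[ μ₁(W) − μ₀(W) ], assuming all terms are integrable. -/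
/-!
Since `μ₁` is `σ(W)`-measurable and `μ₁ · E[Z | W] = E[Y Z | W]`, pulling `μ₁` out of the
conditional expectation gives `E[Z (Y - μ₁) | W] = 0`. As `1 / q` is `σ(W)`-measurable too,
pulling it out as well shows that the augmentation term `Z (Y - μ₁) / q` has mean zero, whatever
`q` is; likewise for `(1 - Z) (Y - μ₀) / (1 - q)`.
-/

open MeasureTheory ProbabilityTheory MeasurableSpace

section

variable {Ω : Type*} {m m0 : MeasurableSpace Ω} {μ : Measure Ω}

lemma integral_mul_eq_zero_of_condExp_eq_zero (hm : m ≤ m0) [SigmaFinite (μ.trim hm)]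
    {f g : Ω → ℝ} (hg : StronglyMeasurable[m] g) (hf : Integrable f μ)
    (hgf : Integrable (g * f) μ) (hf0 : μ[f|m] =ᵐ[μ] 0) :
    ∫ ω, g ω * f ω ∂μ = 0 :=
  calc ∫ ω, g ω * f ω ∂μ = ∫ ω, (μ[g * f|m]) ω ∂μ := (integral_condExp hm).symm
    _ = ∫ ω, (g * μ[f|m]) ω ∂μ :=
        integral_congr_ae (condExp_mul_of_stronglyMeasurable_left hg hgf hf)
    _ = 0 := by
        rw [integral_congr_ae (Filter.EventuallyEq.rfl.mul hf0)]
        simp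

lemma condExp_mul_sub_eq_zero_of_mul_condExp_eq {A Y ν : Ω → ℝ} (hA : Integrable A μ)
    (hYA : Integrable (fun ω => Y ω * A ω) μ) (hν : StronglyMeasurable[m] ν)
    (hAYν : Integrable (fun ω => A ω * (Y ω - ν ω)) μ)
    (hνA : ν * μ[A|m] =ᵐ[μ] μ[fun ω => Y ω * A ω|m]) :
    μ[fun ω => A ω * (Y ω - ν ω)|m] =ᵐ[μ] 0 := by
  have hsplit : (fun ω => A ω * (Y ω - ν ω)) = (fun ω => Y ω * A ω) - ν * A := by
    ext ω; simp only [Pi.sub_apply, Pi.mul_apply]; ring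
  have hνA_int : Integrable (ν * A) μ := by
    simpa only [hsplit, sub_sub_cancel] using hYA.sub hAYν
  rw [hsplit]
  filter_upwards [condExp_sub hYA hνA_int m,
    condExp_mul_of_stronglyMeasurable_left hν hνA_int hA, hνA] with ω hsub hpull hν'
  simp only [hsub, hpull, Pi.sub_apply, Pi.mul_apply, Pi.zero_apply] at hν' ⊢
  rw [hν', sub_self]

lemma integrable_of_integrable_div {f g : Ω → ℝ} {c : ℝ}
    (hfg : Integrable (fun ω => f ω / g ω) μ) (hg : AEStronglyMeasurable g μ)
    (hg_bdd : ∀ᵐ ω ∂μ, g ω ≠ 0 ∧ ‖g ω‖ ≤ c) : Integrable f μ := by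
  refine (hfg.mul_bdd hg (hg_bdd.mono fun _ h => h.2)).congr ?_
  filter_upwards [hg_bdd] with ω hω
  exact div_mul_cancel₀ _ hω.1

lemma condExp_one_sub [IsFiniteMeasure μ] (hm : m ≤ m0) {f : Ω → ℝ} (hf : Integrable f μ) :
    μ[fun ω => 1 - f ω|m] =ᵐ[μ] fun ω => 1 - μ[f|m] ω := by
  have := condExp_sub (integrable_const (1 : ℝ)) hf m
  rwa [condExp_const hm] at this

lemma mul_condExp_eq_of_eq_div {A Y d ν : Ω → ℝ} (hd : d =ᵐ[μ] μ[A|m])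
    (hd0 : ∀ᵐ ω ∂μ, d ω ≠ 0) (hν : ν = fun ω => μ[fun ω => Y ω * A ω|m] ω / d ω) :
    ν * μ[A|m] =ᵐ[μ] μ[fun ω => Y ω * A ω|m] := by
  filter_upwards [hd, hd0] with ω hdω hd0ω
  rw [Pi.mul_apply, ← hdω, hν, div_mul_cancel₀ _ hd0ω]

theorem integral_mul_sub_div_eq_zero [IsFiniteMeasure μ] (hm : m ≤ m0) {A Y ν r : Ω → ℝ}
    {c c' : ℝ} (hA : AEStronglyMeasurable A μ) (hA_bdd : ∀ᵐ ω ∂μ, ‖A ω‖ ≤ c)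
    (hY : Integrable Y μ) (hν : StronglyMeasurable[m] ν)
    (hνA : ν * μ[A|m] =ᵐ[μ] μ[fun ω => Y ω * A ω|m])
    (hr : Measurable[m] r) (hr_bdd : ∀ᵐ ω ∂μ, r ω ≠ 0 ∧ ‖r ω‖ ≤ c')
    (hint : Integrable (fun ω => A ω * (Y ω - ν ω) / r ω) μ) :
    ∫ ω, A ω * (Y ω - ν ω) / r ω ∂μ = 0 := by
  have hAYν : Integrable (fun ω => A ω * (Y ω - ν ω)) μ :=
    integrable_of_integrable_div hint (hr.mono hm le_rfl).aestronglyMeasurable hr_bdd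
  have h0 := condExp_mul_sub_eq_zero_of_mul_condExp_eq ((integrable_const c).mono' hA hA_bdd)
    (hY.mul_bdd hA hA_bdd) hν hAYν hνA
  simp_rw [div_eq_inv_mul] at hint ⊢
  exact integral_mul_eq_zero_of_condExp_eq_zero hm hr.inv.stronglyMeasurable hAYν hint h0

end

theorem doubly_robust_correct_outcome_model_general
    {Ω δ : Type*} [MeasurableSpace Ω] [MeasurableSpace δ]
    (μ : Measure Ω) [IsProbabilityMeasure μ]
    (Z : Ω → ℝ) (Y : Ω → ℝ) (W : Ω → δ)
    (hZ : Measurable Z) (hZ01 : ∀ ω, Z ω = 0 ∨ Z ω = 1)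
    (hYint : Integrable Y μ) (hW : Measurable W)
    (p : Ω → ℝ) (hpdef : p = μ[Z | MeasurableSpace.comap W inferInstance])
    (hp : ∀ᵐ ω ∂μ, 0 < p ω ∧ p ω < 1)
    (μ₁ μ₀ : Ω → ℝ)
    (hμ₁def : μ₁ = fun ω =>
      (μ[fun ω' => Y ω' * Z ω' | MeasurableSpace.comap W inferInstance]) ω / p ω)
    (hμ₀def : μ₀ = fun ω =>
      (μ[fun ω' => Y ω' * (1 - Z ω') | MeasurableSpace.comap W inferInstance]) ω / (1 - p ω))
    (q : Ω → ℝ)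
    (hq_meas : Measurable[MeasurableSpace.comap W inferInstance] q)
    (hq : ∀ᵐ ω ∂μ, 0 < q ω ∧ q ω < 1)
    (hμdiff_int : Integrable (fun ω => μ₁ ω - μ₀ ω) μ)
    (hint1 : Integrable (fun ω => Z ω * (Y ω - μ₁ ω) / q ω) μ)
    (hint0 : Integrable (fun ω => (1 - Z ω) * (Y ω - μ₀ ω) / (1 - q ω)) μ) :
    ∫ ω, (μ₁ ω - μ₀ ω + Z ω * (Y ω - μ₁ ω) / q ω
        - (1 - Z ω) * (Y ω - μ₀ ω) / (1 - q ω)) ∂μ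
      = ∫ ω, (μ₁ ω - μ₀ ω) ∂μ := by
  set m := MeasurableSpace.comap W inferInstance
  have hm : m ≤ _ := hW.comap_le
  have hZ_bdd : ∀ ω, ‖Z ω‖ ≤ 1 ∧ ‖1 - Z ω‖ ≤ 1 := fun ω => by
    rcases hZ01 ω with h | h <;> simp [h]
  have hq_bdd : ∀ᵐ ω ∂μ, (q ω ≠ 0 ∧ ‖q ω‖ ≤ 1) ∧ (1 - q ω ≠ 0 ∧ ‖1 - q ω‖ ≤ 1) := by
    filter_upwards [hq] with ω ⟨hq0, hq1⟩
    rw [Real.norm_of_nonneg hq0.le, Real.norm_of_nonneg (sub_pos.2 hq1).le]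
    exact ⟨⟨hq0.ne', hq1.le⟩, (sub_pos.2 hq1).ne', by linarith⟩
  have hZ_int : Integrable Z μ := (integrable_const (1 : ℝ)).mono' hZ.aestronglyMeasurable
    (ae_of_all _ fun ω => (hZ_bdd ω).1)
  have hp_meas : StronglyMeasurable[m] p := hpdef ▸ stronglyMeasurable_condExp
  have hI₁ : ∫ ω, Z ω * (Y ω - μ₁ ω) / q ω ∂μ = 0 :=
    integral_mul_sub_div_eq_zero hm hZ.aestronglyMeasurable (ae_of_all _ fun ω => (hZ_bdd ω).1)
      hYint (hμ₁def ▸ stronglyMeasurable_condExp.div hp_meas)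
      (mul_condExp_eq_of_eq_div (.of_eq hpdef) (hp.mono fun _ h => h.1.ne') hμ₁def)
      hq_meas (hq_bdd.mono fun _ h => h.1) hint1
  have hI₀ : ∫ ω, (1 - Z ω) * (Y ω - μ₀ ω) / (1 - q ω) ∂μ = 0 :=
    integral_mul_sub_div_eq_zero hm (aestronglyMeasurable_const.sub hZ.aestronglyMeasurable)
      (ae_of_all _ fun ω => (hZ_bdd ω).2) hYint
      (hμ₀def ▸ stronglyMeasurable_condExp.div (stronglyMeasurable_const.sub hp_meas))
      (mul_condExp_eq_of_eq_div (hpdef ▸ (condExp_one_sub hm hZ_int).symm)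
        (hp.mono fun _ h => (sub_pos.2 h.2).ne') hμ₀def)
      (measurable_const.sub hq_meas) (hq_bdd.mono fun _ h => h.2) hint0
  rw [integral_sub ?_ hint0, integral_add hμdiff_int hint1, hI₁, hI₀, add_zero, sub_zero]
  exact hμdiff_int.add hint1

/-- Doubly robust moment identity (correct outcome model): with the true conditional means
`μ₁(W), μ₀(W)` and an arbitrary `σ(W)`-measurable weighting function `q` with `0 < q < 1` a.s.,
the doubly robust score has expectation `E[μ₁(W) − μ₀(W)]`. -/
theorem doubly_robust_correct_outcome_model
    {Ω δ : Type*} [MeasurableSpace Ω] [MeasurableSpace δ]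
    (μ : Measure Ω) [IsProbabilityMeasure μ]
    (Z : Ω → ℝ) (Y : Ω → ℝ) (W : Ω → δ)
    (hZ : Measurable Z) (hZ01 : ∀ ω, Z ω = 0 ∨ Z ω = 1)
    (hY : Measurable Y) (hYint : Integrable Y μ) (hW : Measurable W)
    (p : Ω → ℝ) (hpdef : p = μ[Z | MeasurableSpace.comap W inferInstance])
    (hp : ∀ᵐ ω ∂μ, 0 < p ω ∧ p ω < 1)
    (μ₁ μ₀ : Ω → ℝ)
    (hμ₁def : μ₁ = fun ω =>
      (μ[fun ω' => Y ω' * Z ω' | MeasurableSpace.comap W inferInstance]) ω / p ω)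
    (hμ₀def : μ₀ = fun ω =>
      (μ[fun ω' => Y ω' * (1 - Z ω') | MeasurableSpace.comap W inferInstance]) ω / (1 - p ω))
    (q : Ω → ℝ)
    (hq_meas : Measurable[MeasurableSpace.comap W inferInstance] q)
    (hq : ∀ᵐ ω ∂μ, 0 < q ω ∧ q ω < 1)
    (hscore_int : Integrable (fun ω => μ₁ ω - μ₀ ω + Z ω * (Y ω - μ₁ ω) / q ω
      - (1 - Z ω) * (Y ω - μ₀ ω) / (1 - q ω)) μ)
    (hμdiff_int : Integrable (fun ω => μ₁ ω - μ₀ ω) μ)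
    (hint1 : Integrable (fun ω => Z ω * (Y ω - μ₁ ω) / q ω) μ)
    (hint0 : Integrable (fun ω => (1 - Z ω) * (Y ω - μ₀ ω) / (1 - q ω)) μ) :
    ∫ ω, (μ₁ ω - μ₀ ω + Z ω * (Y ω - μ₁ ω) / q ω
        - (1 - Z ω) * (Y ω - μ₀ ω) / (1 - q ω)) ∂μ
      = ∫ ω, (μ₁ ω - μ₀ ω) ∂μ :=
  doubly_robust_correct_outcome_model_general μ Z Y W hZ hZ01 hYint hW p hpdef hp μ₁ μ₀ hμ₁def
    hμ₀def q hq_meas hq hμdiff_int hint1 hint0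
end

section
/- Testable implication of mean independence (Theorem 2, sufficiency, binary treatment): suppose D is {0,1}-valued, Y = D·Y₁ + (1−D)·Y₀ with Y₀, Y₁ integrable, and for each d ∈ {0,1}, E[Y_d | σ(Z, D, X)] = E[Y_d | σ(X)] almost surely (joint conditional mean independence of the potential outcomes from (Z, D) given X). Then E[Y | σ(Z, D, X)] = E[Y | σ(D, X)] almost surely. -/
/-! Since `D` is bounded and `σ(D, X)`-measurable, it pulls out of the conditional expectation of
`Y = D·Y₁ + (1−D)·Y₀` given either `σ(Z, D, X)` or `σ(D, X)`. This reduces the claim to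
`E[Y_d | σ(D, X)] = E[Y_d | σ(X)]`, which follows from the hypothesis by the tower property,
as `σ(X) ≤ σ(D, X) ≤ σ(Z, D, X)`. -/

open MeasureTheory MeasurableSpace

section

variable {Ω E : Type*} {mΩ : MeasurableSpace Ω} {μ : Measure Ω}
  [NormedAddCommGroup E] [NormedSpace ℝ E] [CompleteSpace E]

theorem condExp_ae_eq_of_le_of_le {m₁ m₂ m₃ : MeasurableSpace Ω} {f : Ω → E}
    (h₃₂ : m₃ ≤ m₂) (h₂₁ : m₂ ≤ m₁) (h₁ : m₁ ≤ mΩ) [SigmaFinite (μ.trim (h₂₁.trans h₁))]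
    (hf : μ[f | m₁] =ᵐ[μ] μ[f | m₃]) : μ[f | m₂] =ᵐ[μ] μ[f | m₃] := by
  have : SigmaFinite (μ.trim h₁) := sigmaFiniteTrim_mono h₁ h₂₁
  calc μ[f | m₂] =ᵐ[μ] μ[μ[f | m₁] | m₂] := (condExp_condExp_of_le h₂₁ h₁).symm
    _ =ᵐ[μ] μ[μ[f | m₃] | m₂] := condExp_congr_ae hf
    _ = μ[f | m₃] := condExp_of_stronglyMeasurable (h₂₁.trans h₁)
      (stronglyMeasurable_condExp.mono h₃₂) integrable_condExp

end

section

variable {Ω : Type*} {m mΩ : MeasurableSpace Ω} {μ : Measure Ω} [IsFiniteMeasure μ]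

theorem condExp_mul_add_one_sub_mul (hm : m ≤ mΩ) {D f g : Ω → ℝ} {c : ℝ}
    (hD : StronglyMeasurable[m] D) (hDc : ∀ᵐ ω ∂μ, ‖D ω‖ ≤ c)
    (hf : Integrable f μ) (hg : Integrable g μ) :
    μ[fun ω => D ω * f ω + (1 - D ω) * g ω | m]
      =ᵐ[μ] fun ω => D ω * μ[f | m] ω + (1 - D ω) * μ[g | m] ω := by
  have hD' : StronglyMeasurable[m] (fun ω => 1 - D ω) := stronglyMeasurable_const.sub hD
  have hDc' : ∀ᵐ ω ∂μ, ‖1 - D ω‖ ≤ 1 + c := hDc.mono fun ω h =>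
    (norm_sub_le _ _).trans (by rw [norm_one]; linarith)
  have hDf : Integrable (fun ω => D ω * f ω) μ :=
    hf.bdd_mul (hD.mono hm).aestronglyMeasurable hDc
  have hDg : Integrable (fun ω => (1 - D ω) * g ω) μ :=
    hg.bdd_mul (hD'.mono hm).aestronglyMeasurable hDc'
  filter_upwards [condExp_add hDf hDg m,
    condExp_stronglyMeasurable_mul_of_bound hm hD hf c hDc,
    condExp_stronglyMeasurable_mul_of_bound hm hD' hg (1 + c) hDc'] with ω hsum h₁ h₂
  exact hsum.trans (congrArg₂ (· + ·) h₁ h₂)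

end

theorem mean_independence_testable_implication_general
    {Ω γ δ : Type*} [MeasurableSpace Ω] [MeasurableSpace γ] [MeasurableSpace δ]
    (μ : Measure Ω) [IsProbabilityMeasure μ]
    (D : Ω → ℝ) (Y0 Y1 : Ω → ℝ) (Z : Ω → γ) (X : Ω → δ)
    (hD : Measurable D) (hD01 : ∀ ω, D ω = 0 ∨ D ω = 1)
    (hY0int : Integrable Y0 μ) (hY1int : Integrable Y1 μ)
    (hZ : Measurable Z) (hX : Measurable X)
    (Y : Ω → ℝ) (hYdef : ∀ ω, Y ω = D ω * Y1 ω + (1 - D ω) * Y0 ω)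
    (h0 : μ[Y0 | MeasurableSpace.comap (fun ω => (Z ω, D ω, X ω)) inferInstance]
      =ᵐ[μ] μ[Y0 | MeasurableSpace.comap X inferInstance])
    (h1 : μ[Y1 | MeasurableSpace.comap (fun ω => (Z ω, D ω, X ω)) inferInstance]
      =ᵐ[μ] μ[Y1 | MeasurableSpace.comap X inferInstance]) :
    μ[Y | MeasurableSpace.comap (fun ω => (Z ω, D ω, X ω)) inferInstance]
      =ᵐ[μ] μ[Y | MeasurableSpace.comap (fun ω => (D ω, X ω)) inferInstance] := by
  obtain rfl : Y = fun ω => D ω * Y1 ω + (1 - D ω) * Y0 ω := funext hYdef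
  have hZDX_le := (hZ.prodMk (hD.prodMk hX)).comap_le
  set mZDX := MeasurableSpace.comap (fun ω => (Z ω, D ω, X ω)) inferInstance
  set mDX := MeasurableSpace.comap (fun ω => (D ω, X ω)) inferInstance
  have hX_le : MeasurableSpace.comap X inferInstance ≤ mDX :=
    (measurable_snd.comp (comap_measurable (fun ω => (D ω, X ω)))).comap_le
  have hDX_le : mDX ≤ mZDX :=
    (measurable_snd.comp (comap_measurable (fun ω => (Z ω, D ω, X ω)))).comap_le
  have hD_meas : StronglyMeasurable[mDX] D :=
    (measurable_fst.comp (comap_measurable (fun ω => (D ω, X ω)))).stronglyMeasurable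
  have hD_le_one : ∀ᵐ ω ∂μ, ‖D ω‖ ≤ 1 := .of_forall fun ω => by
    rcases hD01 ω with h | h <;> simp [h]
  filter_upwards [
    condExp_mul_add_one_sub_mul hZDX_le (hD_meas.mono hDX_le) hD_le_one hY1int hY0int,
    condExp_mul_add_one_sub_mul (hDX_le.trans hZDX_le) hD_meas hD_le_one hY1int hY0int,
    h0, h1, condExp_ae_eq_of_le_of_le hX_le hDX_le hZDX_le h0,
    condExp_ae_eq_of_le_of_le hX_le hDX_le hZDX_le h1] with ω hY_ZDX hY_DX hY0 hY1 hY0_DX hY1_DX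
  rw [hY_ZDX, hY_DX, hY0, hY1, hY0_DX, hY1_DX]

/-- Testable implication of mean independence (Theorem 2, sufficiency, binary treatment): if
`D` is binary, `Y = D·Y₁ + (1−D)·Y₀`, and `E[Y_d | σ(Z,D,X)] = E[Y_d | σ(X)]` a.s. for
`d ∈ {0,1}`, then `E[Y | σ(Z,D,X)] = E[Y | σ(D,X)]` a.s. -/
theorem mean_independence_testable_implication
    {Ω γ δ : Type*} [MeasurableSpace Ω] [MeasurableSpace γ] [MeasurableSpace δ]
    (μ : Measure Ω) [IsProbabilityMeasure μ]
    (D : Ω → ℝ) (Y0 Y1 : Ω → ℝ) (Z : Ω → γ) (X : Ω → δ)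
    (hD : Measurable D) (hD01 : ∀ ω, D ω = 0 ∨ D ω = 1)
    (hY0 : Measurable Y0) (hY1 : Measurable Y1)
    (hY0int : Integrable Y0 μ) (hY1int : Integrable Y1 μ)
    (hZ : Measurable Z) (hX : Measurable X)
    (Y : Ω → ℝ) (hYdef : ∀ ω, Y ω = D ω * Y1 ω + (1 - D ω) * Y0 ω)
    (h0 : μ[Y0 | MeasurableSpace.comap (fun ω => (Z ω, D ω, X ω)) inferInstance]
      =ᵐ[μ] μ[Y0 | MeasurableSpace.comap X inferInstance])
    (h1 : μ[Y1 | MeasurableSpace.comap (fun ω => (Z ω, D ω, X ω)) inferInstance]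
      =ᵐ[μ] μ[Y1 | MeasurableSpace.comap X inferInstance]) :
    μ[Y | MeasurableSpace.comap (fun ω => (Z ω, D ω, X ω)) inferInstance]
      =ᵐ[μ] μ[Y | MeasurableSpace.comap (fun ω => (D ω, X ω)) inferInstance] :=
  mean_independence_testable_implication_general μ D Y0 Y1 Z X hD hD01 hY0int hY1int hZ hX Y hYdef
    h0 h1
end

section
/- Symmetry and reduction for mean independence under binary instrument within a treatment arm: suppose Z is {0,1}-valued, D is {0,1}-valued, X is a random element, and Y is integrable. If Y is conditionally independent of Z given (D, X), then for each d ∈ {0,1} the restricted conditional means agree: E[Y·Z·1{D=d} | σ(X)] · E[1{D=d} | σ(X)] = E[Y·1{D=d} | σ(X)] · E[Z·1{D=d} | σ(X)] almost surely. -/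
/-!
Write `𝓜 = σ(D, X)`. Conditional independence makes `Y` and `Z` independent under the regular
conditional distribution `condExpKernel μ 𝓜 ω` for a.e. `ω`, so
`E[YZ | 𝓜] = E[Y | 𝓜] E[Z | 𝓜]`. By Doob–Dynkin an
`𝓜`-measurable function is `F (D, X)`; on `{D = d}` it agrees with the `σ(X)`-measurable
`F (d, X)`. Let `u, v` be these representatives of `E[Y | 𝓜]` and `E[Z | 𝓜]`, and `χ = 1{D = d}`.
The tower property and pulling out known factors turn `E[W χ | σ(X)]` into `w E[χ | σ(X)]` for
`(W, w) = (Y, u), (Z, v), (YZ, u v)`, so both sides of the claim equal `u v E[χ | σ(X)]²`.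
-/

open MeasureTheory ProbabilityTheory MeasurableSpace

theorem ProbabilityTheory.CondIndepFun.condExp_mul_ae_eq {Ω : Type*}
    {m mΩ : MeasurableSpace Ω} [StandardBorelSpace Ω] {hm : m ≤ mΩ} {μ : Measure Ω}
    [IsFiniteMeasure μ] {Y Z : Ω → ℝ}
    (hYZ : CondIndepFun m hm Y Z μ) (hY : Measurable Y) (hZ : Measurable Z)
    (hY_int : Integrable Y μ) (hZ_int : Integrable Z μ) (hYZ_int : Integrable (Y * Z) μ) :
    μ[Y * Z | m] =ᵐ[μ] μ[Y | m] * μ[Z | m] := by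
  have h_indep : ∀ᵐ ω ∂μ, IndepFun Y Z (condExpKernel μ m ω) := by
    filter_upwards [ae_of_ae_trim hm ((condIndepFun_iff_map_prod_eq_prod_map_map hY hZ).1 hYZ)]
      with ω hω
    rw [indepFun_iff_map_prod_eq_prod_map_map hY.aemeasurable hZ.aemeasurable]
    simpa only [Kernel.map_apply _ (hY.prodMk hZ), Kernel.prod_apply,
      Kernel.map_apply _ hY, Kernel.map_apply _ hZ] using hω
  filter_upwards [h_indep, condExp_ae_eq_integral_condExpKernel hm hYZ_int,
    condExp_ae_eq_integral_condExpKernel hm hY_int,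
    condExp_ae_eq_integral_condExpKernel hm hZ_int] with ω hω hYZω hYω hZω
  rw [Pi.mul_apply, hYZω, hYω, hZω]
  exact hω.integral_mul_eq_mul_integral hY.aestronglyMeasurable hZ.aestronglyMeasurable

theorem MeasureTheory.StronglyMeasurable.exists_comap_eq_on_fiber {Ω α β E : Type*}
    [MeasurableSpace α] [MeasurableSpace β] [TopologicalSpace E]
    [TopologicalSpace.IsCompletelyMetrizableSpace E] [Nonempty E] {D : Ω → α} {X : Ω → β}
    {f : Ω → E}
    (hf : StronglyMeasurable[MeasurableSpace.comap (fun ω => (D ω, X ω)) inferInstance] f) (d : α) :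
    ∃ u : Ω → E, StronglyMeasurable[MeasurableSpace.comap X inferInstance] u ∧
      ∀ ω, D ω = d → f ω = u ω := by
  obtain ⟨F, hF, rfl⟩ := hf.exists_eq_measurable_comp
  exact ⟨fun ω => F (d, X ω),
    hF.comp_measurable (measurable_const.prodMk (comap_measurable X)), fun ω hω => by simp [hω]⟩

theorem MeasureTheory.condExp_mul_ae_eq_of_condExp_mul_ae_eq {Ω : Type*}
    {n m mΩ : MeasurableSpace Ω} {μ : Measure Ω} [IsFiniteMeasure μ] (hnm : n ≤ m) (hm : m ≤ mΩ)
    {W χ u : Ω → ℝ} {C : ℝ} (hW : Integrable W μ) (hχ : StronglyMeasurable[m] χ)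
    (hχ_bdd : ∀ ω, ‖χ ω‖ ≤ C) (hu : StronglyMeasurable[n] u) (h : μ[W | m] * χ =ᵐ[μ] u * χ) :
    μ[fun ω => W ω * χ ω | n] =ᵐ[μ] fun ω => u ω * μ[χ | n] ω := by
  have hχ_meas : AEStronglyMeasurable χ μ := (hχ.mono hm).aestronglyMeasurable
  have hχ_int : Integrable χ μ := .of_bound hχ_meas C (ae_of_all _ hχ_bdd)
  have hWχ_int : Integrable (W * χ) μ := hW.mul_bdd hχ_meas (ae_of_all _ hχ_bdd)
  have huχ_int : Integrable (u * χ) μ :=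
    (integrable_condExp.mul_bdd hχ_meas (ae_of_all _ hχ_bdd)).congr h
  calc μ[W * χ | n] =ᵐ[μ] μ[μ[W * χ | m] | n] := (condExp_condExp_of_le hnm hm).symm
    _ =ᵐ[μ] μ[u * χ | n] :=
      condExp_congr_ae ((condExp_mul_of_stronglyMeasurable_right hχ hWχ_int hW).trans h)
    _ =ᵐ[μ] u * μ[χ | n] := condExp_mul_of_stronglyMeasurable_left hu huχ_int hχ_int

theorem MeasureTheory.condExp_mul_ite_ae_eq_of_ae_eq_on_fiber {Ω α β : Type*}
    [MeasurableSpace α] [MeasurableSingletonClass α] [DecidableEq α] [MeasurableSpace β]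
    {mΩ : MeasurableSpace Ω} {μ : Measure Ω} [IsFiniteMeasure μ] {D : Ω → α} {X : Ω → β}
    (hD : Measurable D) (hX : Measurable X) {W u : Ω → ℝ} {d : α} (hW : Integrable W μ)
    (hu : StronglyMeasurable[MeasurableSpace.comap X inferInstance] u)
    (h : ∀ᵐ ω ∂μ, D ω = d →
      μ[W | MeasurableSpace.comap (fun ω => (D ω, X ω)) inferInstance] ω = u ω) :
    μ[fun ω => W ω * (if D ω = d then (1 : ℝ) else 0) | MeasurableSpace.comap X inferInstance]
      =ᵐ[μ] fun ω => u ω *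
        μ[fun ω => if D ω = d then (1 : ℝ) else 0 | MeasurableSpace.comap X inferInstance] ω := by
  have hχ : StronglyMeasurable[MeasurableSpace.comap (fun ω => (D ω, X ω)) inferInstance]
      fun ω => if D ω = d then (1 : ℝ) else 0 :=
    (Measurable.ite ((comap_measurable (fun ω => (D ω, X ω))).fst (measurableSet_singleton d))
      measurable_const measurable_const).stronglyMeasurable
  refine condExp_mul_ae_eq_of_condExp_mul_ae_eq
    (comap_measurable (fun ω => (D ω, X ω))).snd.comap_le (hD.prodMk hX).comap_le hW hχ (C := 1)
    (fun ω => by split_ifs <;> simp) hu ?_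
  filter_upwards [h] with ω hω
  by_cases hd : D ω = d <;> simp [hd, hω]

theorem restricted_conditional_means_agree_general
    {Ω δ : Type*}
    [MeasurableSpace Ω] [StandardBorelSpace Ω]
    [MeasurableSpace δ]
    (μ : Measure Ω) [IsProbabilityMeasure μ]
    (Z D : Ω → ℝ) (X : Ω → δ) (Y : Ω → ℝ)
    (hZ : Measurable Z) (hZ01 : ∀ ω, Z ω = 0 ∨ Z ω = 1)
    (hD : Measurable D)
    (hX : Measurable X) (hY : Measurable Y)
    (CY : ℝ) (hYbd : ∀ ω, |Y ω| ≤ CY)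
    (hCI : CondIndepFun (MeasurableSpace.comap (fun ω => (D ω, X ω)) inferInstance)
      ((hD.prodMk hX).comap_le) Y Z μ) :
    ∀ d ∈ ({0, 1} : Set ℝ),
      (fun ω =>
          (μ[fun ω' => Y ω' * Z ω' * (if D ω' = d then (1:ℝ) else 0)
              | MeasurableSpace.comap X inferInstance]) ω
            * (μ[fun ω' => (if D ω' = d then (1:ℝ) else 0)
              | MeasurableSpace.comap X inferInstance]) ω)
        =ᵐ[μ] fun ω =>
          (μ[fun ω' => Y ω' * (if D ω' = d then (1:ℝ) else 0)
              | MeasurableSpace.comap X inferInstance]) ω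
            * (μ[fun ω' => Z ω' * (if D ω' = d then (1:ℝ) else 0)
              | MeasurableSpace.comap X inferInstance]) ω := by
  intro d _
  have hZ_bdd : ∀ ω, ‖Z ω‖ ≤ 1 := fun ω => by rcases hZ01 ω with h | h <;> simp [h]
  have hY_int : Integrable Y μ := .of_bound hY.aestronglyMeasurable CY (ae_of_all _ hYbd)
  have hZ_int : Integrable Z μ := .of_bound hZ.aestronglyMeasurable 1 (ae_of_all _ hZ_bdd)
  have hYZ_int : Integrable (fun ω => Y ω * Z ω) μ :=
    hY_int.mul_bdd (c := 1) hZ.aestronglyMeasurable (ae_of_all _ hZ_bdd)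
  obtain ⟨u, hu, hYu⟩ := StronglyMeasurable.exists_comap_eq_on_fiber (D := D) (X := X)
    (stronglyMeasurable_condExp (f := Y) (μ := μ)) d
  obtain ⟨v, hv, hZv⟩ := StronglyMeasurable.exists_comap_eq_on_fiber (D := D) (X := X)
    (stronglyMeasurable_condExp (f := Z) (μ := μ)) d
  have hYZuv := hCI.condExp_mul_ae_eq hY hZ hY_int hZ_int hYZ_int
  filter_upwards [condExp_mul_ite_ae_eq_of_ae_eq_on_fiber hD hX hYZ_int (hu.mul hv)
      (hYZuv.mono fun ω hω hd => hω.trans (congrArg₂ (· * ·) (hYu ω hd) (hZv ω hd))),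
    condExp_mul_ite_ae_eq_of_ae_eq_on_fiber hD hX hY_int hu (ae_of_all _ hYu),
    condExp_mul_ite_ae_eq_of_ae_eq_on_fiber hD hX hZ_int hv (ae_of_all _ hZv)]
    with ω hYZω hYω hZω
  rw [hYZω, hYω, hZω, Pi.mul_apply]
  ring

/-- Symmetry and reduction for mean independence under a binary instrument within a treatment arm:
if `Y ⊥ Z | (D, X)` with `Z, D` binary, then for each `d ∈ {0,1}`,
`E[Y·Z·1{D=d} | σ(X)] · E[1{D=d} | σ(X)] = E[Y·1{D=d} | σ(X)] · E[Z·1{D=d} | σ(X)]` a.s. -/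
theorem restricted_conditional_means_agree
    {Ω δ : Type*}
    [MeasurableSpace Ω] [StandardBorelSpace Ω]
    [MeasurableSpace δ] [StandardBorelSpace δ]
    (μ : Measure Ω) [IsProbabilityMeasure μ]
    (Z D : Ω → ℝ) (X : Ω → δ) (Y : Ω → ℝ)
    (hZ : Measurable Z) (hZ01 : ∀ ω, Z ω = 0 ∨ Z ω = 1)
    (hD : Measurable D) (hD01 : ∀ ω, D ω = 0 ∨ D ω = 1)
    (hX : Measurable X) (hY : Measurable Y)
    (CY : ℝ) (hYbd : ∀ ω, |Y ω| ≤ CY)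
    (hCI : CondIndepFun (MeasurableSpace.comap (fun ω => (D ω, X ω)) inferInstance)
      ((hD.prodMk hX).comap_le) Y Z μ) :
    ∀ d ∈ ({0, 1} : Set ℝ),
      (fun ω =>
          (μ[fun ω' => Y ω' * Z ω' * (if D ω' = d then (1:ℝ) else 0)
              | MeasurableSpace.comap X inferInstance]) ω
            * (μ[fun ω' => (if D ω' = d then (1:ℝ) else 0)
              | MeasurableSpace.comap X inferInstance]) ω)
        =ᵐ[μ] fun ω =>
          (μ[fun ω' => Y ω' * (if D ω' = d then (1:ℝ) else 0)
              | MeasurableSpace.comap X inferInstance]) ω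
            * (μ[fun ω' => Z ω' * (if D ω' = d then (1:ℝ) else 0)
              | MeasurableSpace.comap X inferInstance]) ω :=
  restricted_conditional_means_agree_general μ Z D X Y hZ hZ01 hD hX hY CY hYbd hCI
end
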